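/- arXiv:2511.02743 — 2 statements merged into one kernel-verified Lean document; each statement's English description precedes it below -/
import Mathlib

section
/- Let G be a finite directed graph and suppose u ≠ v are vertices such that there is an edge from u to v or from v to u (Visibility). Then the relative order of u and v in the execution order — defined by first ordering strongly connected components by any topological order of the condensation and then ordering vertices within a component by a fixed linear order on vertices — is the same for all choices of topological order of the condensation. -/
/-- `x` and `y` lie in the same strongly connected component of the directed
graph with edge relation `r`: each reaches the other. -/
def sameSCC {V : Type*} (r : V → V → Prop) (x y : V) : Prop :=
  Relation.ReflTransGen r x y ∧ Relation.ReflTransGen r y x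

/-- The execution order induced by a topological numbering `t` of the
condensation and the fixed linear order on vertices. -/
def execBefore {V : Type*} [LinearOrder V] (t : V → ℕ) (x y : V) : Prop :=
  t x < t y ∨ (t x = t y ∧ x < y)

theorem stmt14 {V : Type*} [Fintype V] [LinearOrder V] (r : V → V → Prop)
    (u v : V) (huv : u ≠ v) (hedge : r u v ∨ r v u)
    (t t' : V → ℕ)
    (ht1 : ∀ x y, sameSCC r x y ↔ t x = t y)
    (ht2 : ∀ x y, r x y → ¬ sameSCC r x y → t x < t y)
    (ht'1 : ∀ x y, sameSCC r x y ↔ t' x = t' y)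
    (ht'2 : ∀ x y, r x y → ¬ sameSCC r x y → t' x < t' y) :
    execBefore t u v ↔ execBefore t' u v := by
  by_cases hs : sameSCC r u v
  · have h1 : t u = t v := (ht1 u v).1 hs
    have h2 : t' u = t' v := (ht'1 u v).1 hs
    simp [execBefore, h1, h2]
  · rcases hedge with h | h
    · have h1 := ht2 u v h hs
      have h2 := ht'2 u v h hs
      simp [execBefore, h1, h2]
    · have hs' : ¬ sameSCC r v u := fun ⟨a, b⟩ => hs ⟨b, a⟩
      have h1 := ht2 v u h hs'
      have h2 := ht'2 v u h hs'
      simp [execBefore, h1.not_gt, h2.not_gt, h1.ne', h2.ne']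
end

section
/- Let Π be a set of n processes with n ≥ 2f+1, let D = ⋃_{q∈Q} D_q and D' = ⋃_{q∈Q'} D'_q where Q, Q' ⊆ Π have |Q|, |Q'| ≥ n−f, and suppose that for every process q ∈ Q ∩ Q', either id ∈ D'_q or id' ∈ D_q. Then id ∈ D' or id' ∈ D. -/
theorem stmt17 {α ι : Type*} [DecidableEq α] [DecidableEq ι]
    (P : Finset α) (n f : ℕ) (hcard : P.card = n) (hn : 2 * f + 1 ≤ n)
    (Q Q' : Finset α) (hQ : Q ⊆ P) (hQ' : Q' ⊆ P)
    (hQc : n - f ≤ Q.card) (hQ'c : n - f ≤ Q'.card)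
    (Dq D'q : α → Finset ι) (cid cid' : ι)
    (h : ∀ q ∈ Q ∩ Q', cid ∈ D'q q ∨ cid' ∈ Dq q) :
    cid ∈ Q'.biUnion D'q ∨ cid' ∈ Q.biUnion Dq := by
  have hun : (Q ∪ Q').card ≤ n := hcard ▸ Finset.card_le_card (Finset.union_subset hQ hQ')
  have hint : 0 < (Q ∩ Q').card := by
    have := Finset.card_inter_add_card_union Q Q'
    omega
  obtain ⟨q, hq⟩ := Finset.card_pos.mp hint
  rcases h q hq with h1 | h2
  · exact Or.inl (Finset.mem_biUnion.mpr ⟨q, (Finset.mem_inter.mp hq).2, h1⟩)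
  · exact Or.inr (Finset.mem_biUnion.mpr ⟨q, (Finset.mem_inter.mp hq).1, h2⟩)
end
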